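/- Let D ⊆ E admit a d-flow and let e ∈ E. Then A(D) = A(D + e) and A(D) = A(D − e) both hold if and only if A(D) = A(D ⊕ e) and A(D) = A(D ⊕ rev e) both hold. -/

import Mathlib

open Finset

section Defs

variable {V : Type*}

/-- Reversal of a directed edge. -/
def drev (e : V × V) : V × V := (e.2, e.1)

/-- `K` is a subgraph of the (symmetric) edge set `E`: it contains either both or
neither of `e` and `drev e` for every `e ∈ E`. -/
def IsSubgraph [DecidableEq V] (E K : Finset (V × V)) : Prop :=
  K ⊆ E ∧ ∀ e ∈ E, (e ∈ K ↔ drev e ∈ K)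

/-- `L` is an orientation of the (symmetric) edge set `E`: it contains exactly one of
`e` and `drev e` for every `e ∈ E`. -/
def IsOrientation [DecidableEq V] (E L : Finset (V × V)) : Prop :=
  L ⊆ E ∧ ∀ e ∈ E, (e ∈ L ↔ drev e ∉ L)

variable [Fintype V] [DecidableEq V]

/-- `f` is a `d`-flow on the directed subgraph `D` of the graph with edge set `E`. -/
def IsFlow (E D : Finset (V × V)) (d : V → ℤ) (f : V × V → ℝ) : Prop :=
  (∀ e ∈ E, 0 ≤ f e ∧ f e ≤ 1) ∧
  (∀ e, e ∉ D → f e = 0) ∧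
  ∀ u : V,
    ((Finset.univ.filter (fun v : V => (u, v) ∈ E)).sum fun v => f (u, v)) -
      ((Finset.univ.filter (fun v : V => (v, u) ∈ E)).sum fun v => f (v, u)) = (d u : ℝ)

/-- A `d`-flow exists on `D`. -/
def AdmitsFlow (E D : Finset (V × V)) (d : V → ℤ) : Prop :=
  ∃ f : V × V → ℝ, IsFlow E D d f

/-- The `w`-cost of a flow `f`. -/
def flowCost (E : Finset (V × V)) (w : V × V → ℝ) (f : V × V → ℝ) : ℝ :=
  ∑ e ∈ E, w e * f e

/-- `f` is a min-cost `d`-flow on `D`. -/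
def IsMinCostFlow (E D : Finset (V × V)) (d : V → ℤ) (w : V × V → ℝ)
    (f : V × V → ℝ) : Prop :=
  IsFlow E D d f ∧ ∀ g : V × V → ℝ, IsFlow E D d g → flowCost E w f ≤ flowCost E w g

/-- The `{0,1}`-valued function determined by a set of edges. -/
def ind (S : Finset (V × V)) : V × V → ℝ := fun e => if e ∈ S then 1 else 0

/-- `A` assigns to every flow-admitting `D ⊆ E` the (edge set of the) unique,
`{0,1}`-valued min-cost `d`-flow on `D`. -/
def GoodA (E : Finset (V × V)) (d : V → ℤ) (w : V × V → ℝ)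
    (A : Finset (V × V) → Finset (V × V)) : Prop :=
  ∀ D : Finset (V × V), D ⊆ E → AdmitsFlow E D d →
    IsMinCostFlow E D d w (ind (A D)) ∧
    ∀ f : V × V → ℝ, IsMinCostFlow E D d w f → f = ind (A D)

/-- `A(D) = A(D')`: both `D` and `D'` admit a `d`-flow and their unique min-cost
`d`-flows coincide.  (If one of them admits no `d`-flow this is false.) -/
def AEq (E : Finset (V × V)) (d : V → ℤ) (A : Finset (V × V) → Finset (V × V))
    (D D' : Finset (V × V)) : Prop :=
  AdmitsFlow E D d ∧ AdmitsFlow E D' d ∧ A D = A D'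

/-- `D ⊕ e := (D ∪ {e}) \ {drev e}`. -/
def oplus (D : Finset (V × V)) (e : V × V) : Finset (V × V) := insert e D \ {drev e}

/-- `D + e := D ∪ {e, drev e}`. -/
def padd (D : Finset (V × V)) (e : V × V) : Finset (V × V) := D ∪ {e, drev e}

/-- `D − e := D \ {e, drev e}`. -/
def psub (D : Finset (V × V)) (e : V × V) : Finset (V × V) := D \ {e, drev e}

/-- The representative of `{e, drev e}` lying in the reference orientation `E'`. -/
def chi (E' : Finset (V × V)) (e : V × V) : V × V := if e ∈ E' then e else drev e

/-- The map `φ_e`. -/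
noncomputable def phiE (E : Finset (V × V)) (d : V → ℤ)
    (A : Finset (V × V) → Finset (V × V)) (E' : Finset (V × V))
    (e : V × V) (D : Finset (V × V)) : Finset (V × V) := by
  classical
  exact
    if ¬ AEq E d A D (oplus D e) then oplus D (drev e)
    else if ¬ AEq E d A D (oplus D (drev e)) then oplus D e
    else if e ∈ D then oplus D (chi E' e) else oplus D (drev (chi E' e))

/-- The map `ψ_e`. -/
noncomputable def psiE (E : Finset (V × V)) (d : V → ℤ)
    (A : Finset (V × V) → Finset (V × V)) (E' : Finset (V × V))
    (e : V × V) (D : Finset (V × V)) : Finset (V × V) := by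
  classical
  exact
    if ¬ AEq E d A D (padd D e) then psub D e
    else if ¬ AEq E d A D (psub D e) then padd D e
    else if chi E' e ∈ D then padd D e else psub D e

end Defs

/-!
If a `{0,1}`-flow is optimal on some edge set and supported on a smaller one, it is optimal
there too. Forward: `A(D) ⊆ D − e ⊆ D ⊕ e ⊆ D + e`, so `A(D) = A(D + e)` is optimal on both
`D ⊕ e` and `D ⊕ rev e`. Backward: `A(D)` lies in `(D ⊕ e) ∩ (D ⊕ rev e) ⊆ D − e`, hence is
optimal on `D − e`; and the optimum on `D + e` never uses both `e` and `rev e` (cancelling the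
2-cycle would lower the cost), so it lies in `D ⊕ e` or `D ⊕ rev e`, where the optimum is `A(D)`.
-/

section Edges

variable {V : Type*}

@[simp]
lemma drev_drev (e : V × V) : drev (drev e) = e := rfl

lemma drev_injective : Function.Injective (drev : V × V → V × V) :=
  Function.LeftInverse.injective drev_drev

variable [DecidableEq V] (D : Finset (V × V)) (a : V × V)

lemma padd_drev : padd D (drev a) = padd D a := by
  rw [padd, padd, drev_drev, pair_comm]

lemma psub_drev : psub D (drev a) = psub D a := by
  rw [psub, psub, drev_drev, pair_comm]

lemma subset_padd : D ⊆ padd D a := subset_union_left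

lemma psub_subset : psub D a ⊆ D := sdiff_subset

lemma oplus_subset_padd : oplus D a ⊆ padd D a := by
  intro x
  simp only [oplus, padd, mem_sdiff, mem_insert, mem_union,
    mem_singleton]
  tauto

lemma psub_subset_oplus : psub D a ⊆ oplus D a := by
  intro x
  simp only [psub, oplus, mem_sdiff, mem_insert, mem_singleton]
  tauto

lemma oplus_inter_oplus_drev_subset_psub : oplus D a ∩ oplus D (drev a) ⊆ psub D a := by
  intro x
  simp only [psub, oplus, drev_drev, mem_inter, mem_sdiff, mem_insert,
    mem_singleton]
  tauto

lemma subset_oplus_of_subset_padd {Y : Finset (V × V)} (hY : Y ⊆ padd D a)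
    (ha : drev a ∉ Y) : Y ⊆ oplus D a := by
  intro x hx
  have hxa : x ≠ drev a := fun h => ha (h ▸ hx)
  have := hY hx
  simp only [padd, oplus, mem_union, mem_sdiff, mem_insert,
    mem_singleton] at this ⊢
  tauto

variable {D a} {E : Finset (V × V)}

lemma padd_subset (hD : D ⊆ E) (ha : a ∈ E) (hra : drev a ∈ E) : padd D a ⊆ E :=
  union_subset hD (insert_subset ha (singleton_subset_iff.2 hra))

lemma oplus_subset (hD : D ⊆ E) (ha : a ∈ E) : oplus D a ⊆ E :=
  sdiff_subset.trans (insert_subset ha hD)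

end Edges

section Indicator

variable {V : Type*} {E S T : Finset (V × V)} {w : V × V → ℝ}

lemma flowCost_sub (E : Finset (V × V)) (w f g : V × V → ℝ) :
    flowCost E w (f - g) = flowCost E w f - flowCost E w g := by
  simp only [flowCost, Pi.sub_apply, mul_sub, sum_sub_distrib]

variable [DecidableEq V]

lemma ind_nonneg (S : Finset (V × V)) (x : V × V) : 0 ≤ ind S x := by
  unfold ind; split_ifs <;> norm_num

lemma ind_le_one (S : Finset (V × V)) (x : V × V) : ind S x ≤ 1 := by
  unfold ind; split_ifs <;> norm_num

lemma ind_injective : Function.Injective (ind : Finset (V × V) → V × V → ℝ) := by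
  intro S T h
  ext x
  have := congrFun h x
  by_cases hS : x ∈ S <;> by_cases hT : x ∈ T <;> simp_all [ind]

lemma ind_sdiff (h : T ⊆ S) : ind (S \ T) = ind S - ind T := by
  funext x
  by_cases hT : x ∈ T
  · simp [ind, hT, h hT]
  · simp [ind, hT]

lemma flowCost_ind_pos (hw : ∀ x ∈ E, 0 < w x) {e : V × V} (he : e ∈ E) (heS : e ∈ S) :
    0 < flowCost E w (ind S) := by
  have hnonneg : ∀ x ∈ E, 0 ≤ w x * ind S x := fun x hx =>
    mul_nonneg (hw x hx).le (ind_nonneg S x)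
  calc 0 < w e * ind S e := by simp [ind, heS, hw e he]
    _ ≤ flowCost E w (ind S) := single_le_sum hnonneg he

end Indicator

section Flows

variable {V : Type*} [Fintype V] [DecidableEq V] {E D D' S T : Finset (V × V)} {d : V → ℤ}
  {w : V × V → ℝ} {f : V × V → ℝ}

-- Definitionally the left-hand side of the conservation law in `IsFlow`.
def netOutflow (E : Finset (V × V)) (f : V × V → ℝ) (u : V) : ℝ :=
  (∑ v ∈ Finset.univ.filter (fun v : V => (u, v) ∈ E), f (u, v)) -
    ∑ v ∈ Finset.univ.filter (fun v : V => (v, u) ∈ E), f (v, u)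

lemma netOutflow_sub (E : Finset (V × V)) (f g : V × V → ℝ) (u : V) :
    netOutflow E (f - g) u = netOutflow E f u - netOutflow E g u := by
  simp only [netOutflow, Pi.sub_apply, sum_sub_distrib]
  ring

lemma netOutflow_ind_eq_zero (hE : ∀ x, x ∈ E ↔ drev x ∈ E) (hS : ∀ x, x ∈ S ↔ drev x ∈ S)
    (u : V) : netOutflow E (ind S) u = 0 := by
  have hfilter : Finset.univ.filter (fun v : V => (u, v) ∈ E) =
      Finset.univ.filter (fun v : V => (v, u) ∈ E) :=
    filter_congr fun v _ => hE (u, v)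
  have hind : ∀ v, ind S (u, v) = ind S (v, u) := fun v => by
    simp only [ind, hS (u, v)]
    rfl
  simp only [netOutflow, hfilter, hind, sub_self]

lemma IsFlow.mono (hDD' : D ⊆ D') (hf : IsFlow E D d f) : IsFlow E D' d f :=
  ⟨hf.1, fun x hx => hf.2.1 x (fun hxD => hx (hDD' hxD)), hf.2.2⟩

lemma IsFlow.ind_subset (hf : IsFlow E D d (ind S)) : S ⊆ D := by
  intro x hx
  by_contra hxD
  simpa [ind, hx] using hf.2.1 x hxD

lemma IsFlow.ind_of_subset (hf : IsFlow E D d (ind S)) (hS : S ⊆ D') :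
    IsFlow E D' d (ind S) :=
  ⟨hf.1, fun x hx => by simp [ind, show x ∉ S from fun h => hx (hS h)], hf.2.2⟩

lemma IsFlow.ind_sdiff_of_netOutflow_eq_zero (hf : IsFlow E D d (ind S)) (hT : T ⊆ S)
    (hT0 : ∀ u, netOutflow E (ind T) u = 0) : IsFlow E D d (ind (S \ T)) := by
  refine ⟨fun x _ => ⟨ind_nonneg _ x, ind_le_one _ x⟩, fun x hx => ?_, fun u => ?_⟩
  · have : x ∉ S \ T := fun h => hx (hf.ind_subset (mem_sdiff.1 h).1)
    simp [ind, this]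
  · change netOutflow E _ u = _
    rw [ind_sdiff hT, netOutflow_sub, hT0, sub_zero]
    exact hf.2.2 u

lemma IsMinCostFlow.of_subset {X : Finset (V × V)} (hDD' : D ⊆ D') (hX : X ⊆ D)
    (h : IsMinCostFlow E D' d w (ind X)) : IsMinCostFlow E D d w (ind X) :=
  ⟨h.1.ind_of_subset hX, fun g hg => h.2 g (hg.mono hDD')⟩

lemma IsMinCostFlow.drev_not_mem (hE : ∀ x, x ∈ E ↔ drev x ∈ E) (hw : ∀ x ∈ E, 0 < w x)
    {Y : Finset (V × V)} (hmin : IsMinCostFlow E D d w (ind Y)) {e : V × V} (he : e ∈ E)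
    (heY : e ∈ Y) : drev e ∉ Y := by
  intro hreY
  set C : Finset (V × V) := {e, drev e}
  have hCY : C ⊆ Y := insert_subset heY (singleton_subset_iff.2 hreY)
  have hCsymm : ∀ x, x ∈ C ↔ drev x ∈ C := fun x => by
    simp only [C, mem_insert, mem_singleton]
    constructor
    · rintro (rfl | rfl)
      exacts [Or.inr rfl, Or.inl rfl]
    · rintro (h | h)
      exacts [Or.inr (by rw [← h, drev_drev]), Or.inl (drev_injective h)]
  have hle := hmin.2 _ (hmin.1.ind_sdiff_of_netOutflow_eq_zero hCY (netOutflow_ind_eq_zero hE hCsymm))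
  rw [ind_sdiff hCY, flowCost_sub] at hle
  linarith [flowCost_ind_pos hw he (mem_insert_self e {drev e})]

end Flows

namespace GoodA

variable {V : Type*} [Fintype V] [DecidableEq V] {E D D' X : Finset (V × V)} {d : V → ℤ}
  {w : V × V → ℝ} {A : Finset (V × V) → Finset (V × V)}

lemma eq_of_isMinCostFlow (hA : GoodA E d w A) (hD : D ⊆ E)
    (h : IsMinCostFlow E D d w (ind X)) : A D = X :=
  ind_injective ((hA D hD ⟨_, h.1⟩).2 _ h).symm

lemma isMinCostFlow_of_aEq (hA : GoodA E d w A) (hD' : D' ⊆ E) (h : AEq E d A D D') :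
    IsMinCostFlow E D' d w (ind (A D)) :=
  h.2.2 ▸ (hA D' hD' h.2.1).1

lemma aEq_of_isMinCostFlow (hA : GoodA E d w A) (hD' : D' ⊆ E) (hD : AdmitsFlow E D d)
    (h : IsMinCostFlow E D' d w (ind (A D))) : AEq E d A D D' :=
  ⟨hD, ⟨_, h.1⟩, (hA.eq_of_isMinCostFlow hD' h).symm⟩

lemma aEq_oplus_of_aEq_padd_of_aEq_psub (hA : GoodA E d w A) (hD : D ⊆ E) {e : V × V}
    (he : e ∈ E) (hre : drev e ∈ E) (hP : AEq E d A D (padd D e))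
    (hS : AEq E d A D (psub D e)) : AEq E d A D (oplus D e) := by
  have hminP := hA.isMinCostFlow_of_aEq (padd_subset hD he hre) hP
  have hXS := (hA.isMinCostFlow_of_aEq ((psub_subset D e).trans hD) hS).1.ind_subset
  exact hA.aEq_of_isMinCostFlow (oplus_subset hD he) hP.1
    (hminP.of_subset (oplus_subset_padd D e) (hXS.trans (psub_subset_oplus D e)))

lemma apply_padd_eq_of_drev_not_mem (hA : GoodA E d w A) (hD : D ⊆ E) {e : V × V}
    (he : e ∈ E) (hre : drev e ∈ E) (hadm : AdmitsFlow E (padd D e) d)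
    (hY : drev e ∉ A (padd D e)) (h : AEq E d A D (oplus D e)) : A (padd D e) = A D := by
  have hminP := (hA _ (padd_subset hD he hre) hadm).1
  have hYop := subset_oplus_of_subset_padd D e hminP.1.ind_subset hY
  rw [h.2.2, hA.eq_of_isMinCostFlow (oplus_subset hD he)
    (hminP.of_subset (oplus_subset_padd D e) hYop)]

lemma aEq_psub_of_aEq_oplus (hA : GoodA E d w A) (hD : D ⊆ E) {e : V × V} (he : e ∈ E)
    (hre : drev e ∈ E) (h₁ : AEq E d A D (oplus D e)) (h₂ : AEq E d A D (oplus D (drev e))) :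
    AEq E d A D (psub D e) := by
  have hX₁ := (hA.isMinCostFlow_of_aEq (oplus_subset hD he) h₁).1.ind_subset
  have hX₂ := (hA.isMinCostFlow_of_aEq (oplus_subset hD hre) h₂).1.ind_subset
  have hXS := (subset_inter hX₁ hX₂).trans (oplus_inter_oplus_drev_subset_psub D e)
  exact hA.aEq_of_isMinCostFlow ((psub_subset D e).trans hD) h₁.1
    ((hA D hD h₁.1).1.of_subset (psub_subset D e) hXS)

lemma aEq_padd_of_aEq_oplus (hA : GoodA E d w A) (hE : ∀ x, x ∈ E ↔ drev x ∈ E)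
    (hw : ∀ x ∈ E, 0 < w x) (hD : D ⊆ E) {e : V × V} (he : e ∈ E)
    (h₁ : AEq E d A D (oplus D e)) (h₂ : AEq E d A D (oplus D (drev e))) :
    AEq E d A D (padd D e) := by
  have hre : drev e ∈ E := (hE e).1 he
  have hadm : AdmitsFlow E (padd D e) d := ⟨_, (hA D hD h₁.1).1.1.mono (subset_padd D e)⟩
  refine ⟨h₁.1, hadm, ?_⟩
  by_cases hY : drev e ∈ A (padd D e)
  · have heY := (hA _ (padd_subset hD he hre) hadm).1.drev_not_mem hE hw hre hY
    rw [← padd_drev] at hadm heY ⊢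
    exact (hA.apply_padd_eq_of_drev_not_mem hD hre he hadm heY h₂).symm
  · exact (hA.apply_padd_eq_of_drev_not_mem hD he hre hadm hY h₁).symm

end GoodA

theorem minCostFlow_padd_psub_iff_oplus_both_general
    {V : Type*} [Fintype V] [DecidableEq V]
    (E : Finset (V × V)) (hE_symm : ∀ e, e ∈ E ↔ drev e ∈ E)
    (d : V → ℤ)
    (w : V × V → ℝ) (hw : ∀ e ∈ E, 0 < w e)
    (A : Finset (V × V) → Finset (V × V)) (hA : GoodA E d w A)
    (D : Finset (V × V)) (hD : D ⊆ E)
    (e : V × V) (he : e ∈ E) :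
    (AEq E d A D (padd D e) ∧ AEq E d A D (psub D e)) ↔
      (AEq E d A D (oplus D e) ∧ AEq E d A D (oplus D (drev e))) := by
  have hre : drev e ∈ E := (hE_symm e).1 he
  constructor
  · rintro ⟨hP, hS⟩
    refine ⟨hA.aEq_oplus_of_aEq_padd_of_aEq_psub hD he hre hP hS, ?_⟩
    rw [← padd_drev] at hP
    rw [← psub_drev] at hS
    exact hA.aEq_oplus_of_aEq_padd_of_aEq_psub hD hre he hP hS
  · rintro ⟨h₁, h₂⟩
    exact ⟨hA.aEq_padd_of_aEq_oplus hE_symm hw hD he h₁ h₂,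
      hA.aEq_psub_of_aEq_oplus hD he hre h₁ h₂⟩

theorem minCostFlow_padd_psub_iff_oplus_both
    {V : Type*} [Fintype V] [DecidableEq V]
    (E : Finset (V × V)) (hE_symm : ∀ e, e ∈ E ↔ drev e ∈ E)
    (hE_ne : ∀ e ∈ E, e.1 ≠ e.2)
    (d : V → ℤ) (hd : ∑ u : V, d u = 0)
    (w : V × V → ℝ) (hw : ∀ e ∈ E, 0 < w e)
    (A : Finset (V × V) → Finset (V × V)) (hA : GoodA E d w A)
    (D : Finset (V × V)) (hD : D ⊆ E) (hDf : AdmitsFlow E D d)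
    (e : V × V) (he : e ∈ E) :
    (AEq E d A D (padd D e) ∧ AEq E d A D (psub D e)) ↔
      (AEq E d A D (oplus D e) ∧ AEq E d A D (oplus D (drev e))) :=
  minCostFlow_padd_psub_iff_oplus_both_general E hE_symm d w hw A hA D hD e he
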